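/- For any two central soft sets (f, A) and (g, B) over a common universe U, the difference (f, A) − (g, B) is below (f, A) in the central soft information order: (f, A) − (g, B) ⊑ (f, A). -/

import Mathlib

open Classical

/-- A central soft set over a universe `U` with parameter set `E`:
a mapping `f : E → Set U` together with a central set `A ⊆ E`. -/
structure CSS (E U : Type*) where
  f : E → Set U
  A : Set E

/-- Union of central soft sets. -/
noncomputable def cssUnion {E U : Type*} (s t : CSS E U) : CSS E U where
  f := fun e =>
    if e ∈ s.A \ t.A then s.f e
    else if e ∈ t.A \ s.A then t.f e
    else s.f e ∪ t.f e
  A := s.A ∪ t.A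

/-- Intersection of central soft sets. -/
noncomputable def cssInter {E U : Type*} (s t : CSS E U) : CSS E U where
  f := fun e =>
    if e ∈ s.A \ t.A then t.f e
    else if e ∈ t.A \ s.A then s.f e
    else s.f e ∩ t.f e
  A := s.A ∩ t.A

/-- Complement of a central soft set. -/
def cssCompl {E U : Type*} (s : CSS E U) : CSS E U where
  f := fun e => (s.f e)ᶜ
  A := s.Aᶜ

/-- Difference of central soft sets: `s − t = s ⊓ tᶜ`. -/
noncomputable def cssDiff {E U : Type*} (s t : CSS E U) : CSS E U :=
  cssInter s (cssCompl t)

/-- The central soft information order: `s ⊑ t` iff `s ⊔ t = t`. -/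
def cssLE {E U : Type*} (s t : CSS E U) : Prop := cssUnion s t = t

/-- Projection of a central soft set over a set `B` of parameters
(the mapping is unchanged, the central set becomes `B`). -/
def cssProj {E U : Type*} (s : CSS E U) (B : Set E) : CSS E U where
  f := s.f
  A := B

/-- Supremum of a family of central soft sets. -/
noncomputable def cssSup {E U ι : Type*} (F : ι → CSS E U) : CSS E U where
  f := fun e =>
    if {i : ι | e ∈ (F i).A}.Nonempty then ⋃ i ∈ {i : ι | e ∈ (F i).A}, (F i).f e
    else ⋃ i, (F i).f e
  A := ⋃ i, (F i).A

theorem cssLE_iff {E U : Type*} {s t : CSS E U} :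
    cssLE s t ↔ s.A ⊆ t.A ∧ ∀ e, e ∉ t.A \ s.A → s.f e ⊆ t.f e := by
  obtain ⟨fs, As⟩ := s
  obtain ⟨ft, At⟩ := t
  simp only [cssLE, cssUnion, CSS.mk.injEq, Set.union_eq_right, funext_iff]
  refine and_comm.trans (and_congr_right fun hA => forall_congr' fun e => ?_)
  have hnotAs : e ∉ As \ At := fun he => he.2 (hA he.1)
  by_cases he : e ∈ At \ As <;> simp [hnotAs, he]

theorem cssInter_f_subset_left {E U : Type*} (s t : CSS E U) {e : E} (he : e ∉ s.A \ t.A) :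
    (cssInter s t).f e ⊆ s.f e := by
  simp only [cssInter, he, if_false]
  split_ifs
  · exact subset_rfl
  · exact Set.inter_subset_left

theorem cssInter_le_left {E U : Type*} (s t : CSS E U) : cssLE (cssInter s t) s := by
  refine cssLE_iff.2 ⟨Set.inter_subset_left, fun e he => cssInter_f_subset_left s t ?_⟩
  simpa [cssInter] using he

theorem stmt6 {E U : Type*} (s t : CSS E U) :
    cssLE (cssDiff s t) s :=
  cssInter_le_left s (cssCompl t)
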